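/- For every integer g ≥ 2 there exists ε > 0 such that for all 0 < l < ε, the quantity r(l) defined by sinh²(r(l)) = (1/2)(√(1-2k)/k - 1), k = cosh(√(4πl/√3)) - 1, satisfies r(l) > arccosh(2g - 1). -/

import Mathlib

/-! As `l → 0⁺` we have `k → 0⁺`, so `√(1 - 2k) / k → ∞` and hence `r(l) → ∞`; the radius
therefore eventually exceeds any fixed bound, in particular `arccosh (2g - 1)`. -/

open Real Filter Set

/-- The inverse of `cosh` on `[0, ∞)`. -/
noncomputable def arccosh (x : ℝ) : ℝ := Real.log (x + Real.sqrt (x ^ 2 - 1))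

/-- Meyerhoff's tube-radius lower bound as a function of the geodesic length `l`. -/
noncomputable def meyerhoffRadius (l : ℝ) : ℝ :=
  Real.arsinh (Real.sqrt ((1 / 2) *
    (Real.sqrt (1 - 2 * (Real.cosh (Real.sqrt (4 * Real.pi * l / Real.sqrt 3)) - 1)) /
        (Real.cosh (Real.sqrt (4 * Real.pi * l / Real.sqrt 3)) - 1) - 1)))

open Topology

lemma Real.tendsto_arsinh_atTop : Tendsto arsinh atTop atTop :=
  sinhOrderIso.symm.tendsto_atTop

lemma tendsto_cosh_sqrt_mul_sub_one_nhdsGT_zero {c : ℝ} (hc : 0 < c) :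
    Tendsto (fun l => cosh √(c * l) - 1) (𝓝[>] 0) (𝓝[>] 0) := by
  refine tendsto_nhdsWithin_of_tendsto_nhds_of_eventually_within _ ?_ ?_
  · have hcont : Continuous (fun l => cosh √(c * l) - 1) := by fun_prop
    simpa using (hcont.tendsto 0).mono_left nhdsWithin_le_nhds
  · filter_upwards [self_mem_nhdsWithin] with l (hl : 0 < l)
    have : √(c * l) ≠ 0 := (sqrt_pos.2 (mul_pos hc hl)).ne'
    simpa using one_lt_cosh.2 this

lemma tendsto_sqrt_one_sub_two_mul_div_self_nhdsGT_zero :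
    Tendsto (fun k : ℝ => √(1 - 2 * k) / k) (𝓝[>] 0) atTop := by
  have hnum : Tendsto (fun k : ℝ => √(1 - 2 * k)) (𝓝[>] 0) (𝓝 1) := by
    have hcont : Continuous (fun k : ℝ => √(1 - 2 * k)) := by fun_prop
    simpa using (hcont.tendsto 0).mono_left nhdsWithin_le_nhds
  simpa only [div_eq_mul_inv] using hnum.pos_mul_atTop one_pos tendsto_inv_nhdsGT_zero

lemma tendsto_meyerhoffRadius_nhdsGT_zero : Tendsto meyerhoffRadius (𝓝[>] 0) atTop := by
  have hk := tendsto_cosh_sqrt_mul_sub_one_nhdsGT_zero (c := 4 * π / √3) (by positivity)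
  have hr := tendsto_arsinh_atTop.comp <| tendsto_sqrt_atTop.comp <|
    ((tendsto_atTop_add_const_right _ (-1)
      tendsto_sqrt_one_sub_two_mul_div_self_nhdsGT_zero).const_mul_atTop one_half_pos).comp hk
  refine hr.congr fun l => ?_
  simp only [Function.comp_apply, meyerhoffRadius, mul_div_right_comm, ← sub_eq_add_neg]

theorem exists_eps_meyerhoff_radius_gt_general (g : ℤ) :
    ∃ ε : ℝ, 0 < ε ∧ ∀ l : ℝ, 0 < l → l < ε →
      meyerhoffRadius l > arccosh (2 * (g : ℝ) - 1) := by
  obtain ⟨ε, hε, hsub⟩ := mem_nhdsGT_iff_exists_Ioo_subset.1 <|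
    tendsto_meyerhoffRadius_nhdsGT_zero.eventually_gt_atTop (arccosh (2 * (g : ℝ) - 1))
  exact ⟨ε, hε, fun l hl hlε => hsub ⟨hl, hlε⟩⟩

/-- For every integer `g ≥ 2` there exists `ε > 0` such that for all `0 < l < ε`,
Meyerhoff's tube radius `r(l)` exceeds `arccosh (2g - 1)`. -/
theorem exists_eps_meyerhoff_radius_gt (g : ℤ) (hg : 2 ≤ g) :
    ∃ ε : ℝ, 0 < ε ∧ ∀ l : ℝ, 0 < l → l < ε →
      meyerhoffRadius l > arccosh (2 * (g : ℝ) - 1) :=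
  exists_eps_meyerhoff_radius_gt_general g
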